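/- For Q_0(x) = 2x_1x_3 - x_2^2, L_0(x) = x_3, and ξ_α = (0,0,α) with α ∈ R, the joint stabilizer SO((Q_0)_{ξ_α}, L_0) in SL(3,R) ⋉ R^3 equals the one-parameter unipotent group H_α = {([[1,t,t²/2],[0,1,t],[0,0,1]], (αt²/2, αt, 0)) : t ∈ R}. -/
import Mathlib


open Matrix

/-- The quadratic form `Q₀(x) = 2x₁x₃ - x₂²`. -/
def Q0 (x : Fin 3 → ℝ) : ℝ := 2 * x 0 * x 2 - (x 1) ^ 2

/-- the joint stabilizer in `SL(3,ℝ) ⋉ ℝ³` of `(Q₀)_{(0,0,α)}` and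
`L₀(x) = x₃` is the one-parameter unipotent group `H_α`. -/
theorem stmt17 (α : ℝ) :
    {p : Matrix (Fin 3) (Fin 3) ℝ × (Fin 3 → ℝ) |
        p.1.det = 1 ∧
        (∀ x : Fin 3 → ℝ, Q0 (p.1.mulVec x + p.2 + ![0, 0, α]) = Q0 (x + ![0, 0, α])) ∧
        (∀ x : Fin 3 → ℝ, (p.1.mulVec x + p.2) 2 = x 2)} =
    {p : Matrix (Fin 3) (Fin 3) ℝ × (Fin 3 → ℝ) |
        ∃ t : ℝ, p = (!![1, t, t ^ 2 / 2; 0, 1, t; 0, 0, 1],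
          ![α * t ^ 2 / 2, α * t, 0])} := by
  ext ⟨g, v⟩
  simp only [Set.mem_setOf_eq]
  constructor
  · rintro ⟨hdet, hQ, hL⟩
    have h0 := hL ![0,0,0]
    have h1 := hL ![1,0,0]
    have h2 := hL ![0,1,0]
    have h3 := hL ![0,0,1]
    have E0 := hQ ![0,0,0]
    have Ep0 := hQ ![1,0,0]
    have Em0 := hQ ![-1,0,0]
    have Ep1 := hQ ![0,1,0]
    have Em1 := hQ ![0,-1,0]
    have Ep2 := hQ ![0,0,1]
    have Em2 := hQ ![0,0,-1]
    have E02 := hQ ![1,0,1]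
    have E12 := hQ ![0,1,1]
    simp only [Matrix.mulVec, dotProduct, Fin.sum_univ_three, Q0, Pi.add_apply,
      Matrix.cons_val_zero, Matrix.cons_val_one, Matrix.head_cons, Matrix.cons_val_two,
      Matrix.tail_cons] at h0 h1 h2 h3 E0 Ep0 Em0 Ep1 Em1 Ep2 Em2 E02 E12
    have hv2 : v 2 = 0 := by linarith
    have hg20 : g 2 0 = 0 := by linarith
    have hg21 : g 2 1 = 0 := by linarith
    have hg22 : g 2 2 = 1 := by linarith
    simp only [hv2, hg20, hg21, hg22] at E0 Ep0 Em0 Ep1 Em1 Ep2 Em2 E02 E12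
    have sq10 : g 1 0 ^ 2 = 0 := by linear_combination (-(1:ℝ)/2) * Ep0 - (1/2) * Em0 + E0
    have hg10 : g 1 0 = 0 := by
      exact pow_eq_zero_iff (two_ne_zero).elim |>.mp sq10
    simp only [hg10] at E0 Ep0 Em0 Ep1 Em1 Ep2 Em2 E02 E12
    have hg00 : g 0 0 = 1 := by
      linear_combination (1/2) * E02 - (1/2) * Ep0 - (1/2) * Ep2 + (1/2) * E0
    rw [Matrix.det_fin_three] at hdet
    simp only [hv2, hg20, hg21, hg22, hg10, hg00] at hdet
    have hg11 : g 1 1 = 1 := by linear_combination hdet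
    simp only [hg11] at E0 Ep0 Em0 Ep1 Em1 Ep2 Em2 E02 E12
    have hg01 : g 0 1 = g 1 2 := by
      linear_combination (1/2) * E12 - (1/2) * Ep1 - (1/2) * Ep2 + (1/2) * E0
    have hg02 : g 0 2 = g 1 2 ^ 2 / 2 := by
      linear_combination (1/4) * Ep2 + (1/4) * Em2 - (1/2) * E0
    have hv1 : v 1 = α * g 1 2 := by
      linear_combination (-1/4) * Ep1 + (1/4) * Em1 + α * hg01
    have hv0 : v 0 = α * g 1 2 ^ 2 / 2 := by
      linear_combination (1/4) * Ep2 - (1/4) * Em2 + (g 1 2) * hv1 - α * hg02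
    refine ⟨g 1 2, ?_⟩
    simp only [Prod.mk.injEq]
    constructor
    · ext i j
      fin_cases i <;> fin_cases j <;>
        simp [hg00, hg01, hg02, hg10, hg11, hg20, hg21, hg22,
          Matrix.vecHead, Matrix.vecTail]
    · funext i
      fin_cases i <;> simp [hv0, hv1, hv2, Matrix.vecHead, Matrix.vecTail]
  · rintro ⟨t, h⟩
    rw [Prod.mk.injEq] at h
    obtain ⟨rfl, rfl⟩ := h
    refine ⟨by simp [Matrix.det_fin_three, Matrix.vecHead, Matrix.vecTail], fun x => ?_, fun x => ?_⟩ <;>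
      simp [Q0, Matrix.mulVec, dotProduct, Fin.sum_univ_three] <;> ring
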